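/- arXiv:2206.09254 — 2 statements merged into one kernel-verified Lean document; each statement's English description precedes it below -/
import Mathlib

section
/- Let π^μ be a stationary point of the replicator–mutator dynamics with mutation parameter μ > 0 and reference strategies c_i ∈ Δ°(A_i). Then π^μ is a 2μ-Nash equilibrium of the game: exploit(π^μ) = Σ_{i=1}^{2} max_{π̃_i∈Δ(A_i)} v_i^{π̃_i, π_{−i}^μ} ≤ 2μ. -/
open Finset

noncomputable section

variable {A1 A2 : Type*}

/-- Expected utility of the strategy profile `(p1, p2)` under utility function `u`. -/
def eV [Fintype A1] [Fintype A2] (u : A1 → A2 → ℝ) (p1 : A1 → ℝ) (p2 : A2 → ℝ) : ℝ :=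
  ∑ a1, ∑ a2, p1 a1 * p2 a2 * u a1 a2

/-- Conditional expected utility of action `a1` for player 1. -/
def cV1 [Fintype A2] (u : A1 → A2 → ℝ) (p2 : A2 → ℝ) (a1 : A1) : ℝ :=
  ∑ a2, p2 a2 * u a1 a2

/-- Conditional expected utility of action `a2` for player 2. -/
def cV2 [Fintype A1] (u : A1 → A2 → ℝ) (p1 : A1 → ℝ) (a2 : A2) : ℝ :=
  ∑ a1, p1 a1 * u a1 a2

/-- Kullback–Leibler divergence (with the convention `0 ln 0 = 0`,
which holds since `Real.log 0 = 0` in Lean). -/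
def KLd {A : Type*} [Fintype A] (p q : A → ℝ) : ℝ :=
  ∑ a, p a * Real.log (p a / q a)

/-- Bregman divergence associated with a differentiable function `ψ`. -/
def breg {A : Type*} [Fintype A] (ψ : (A → ℝ) → ℝ) (x y : A → ℝ) : ℝ :=
  ψ x - ψ y - fderiv ℝ ψ y (x - y)

/-- Euclidean inner product on `A → ℝ`. -/
def ip {A : Type*} [Fintype A] (z p : A → ℝ) : ℝ := ∑ a, z a * p a

/-!
At a stationary point with `c_i > 0`, every action is played with positive probability, and
the stationarity equation `π(a) (q(a) - v) = μ (π(a) - c(a)) < μ π(a)` shows that no action beats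
the current value `v_i` by `μ` or more. Hence a best response gains at most `μ` over `v_i`, and the
two gains add up to at most `2μ` because `v₁ + v₂ = 0` in a zero-sum game.
-/

theorem sum_mul_le_of_mem_stdSimplex {A : Type*} [Fintype A] {p f : A → ℝ} {b : ℝ}
    (hp : p ∈ stdSimplex ℝ A) (hf : ∀ a, f a ≤ b) : ∑ a, p a * f a ≤ b :=
  calc ∑ a, p a * f a ≤ ∑ a, p a * b :=
        sum_le_sum fun a _ => mul_le_mul_of_nonneg_left (hf a) (hp.1 a)
    _ = b := by rw [← sum_mul, hp.2, one_mul]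

section

variable [Fintype A1] [Fintype A2]

theorem eV_eq_sum_mul_cV1 (u : A1 → A2 → ℝ) (p1 : A1 → ℝ) (p2 : A2 → ℝ) :
    eV u p1 p2 = ∑ a, p1 a * cV1 u p2 a := by
  simp only [eV, cV1, mul_sum, mul_assoc]

theorem eV_eq_sum_mul_cV2 (u : A1 → A2 → ℝ) (p1 : A1 → ℝ) (p2 : A2 → ℝ) :
    eV u p1 p2 = ∑ a, p2 a * cV2 u p1 a := by
  rw [eV, sum_comm]
  simp only [cV2, mul_sum]
  exact sum_congr rfl fun _ _ => sum_congr rfl fun _ _ => by ring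

theorem eV_add_eV_of_zero_sum {u1 u2 : A1 → A2 → ℝ} (hzs : ∀ a1 a2, u2 a1 a2 = -u1 a1 a2)
    (p1 : A1 → ℝ) (p2 : A2 → ℝ) : eV u1 p1 p2 + eV u2 p1 p2 = 0 := by
  simp only [eV, hzs, mul_neg, sum_neg_distrib, add_neg_cancel]

theorem iSup_eV_left_le [Nonempty (stdSimplex ℝ A1)] {u : A1 → A2 → ℝ} {p2 : A2 → ℝ} {b : ℝ}
    (h : ∀ a, cV1 u p2 a ≤ b) : ⨆ p : stdSimplex ℝ A1, eV u p.1 p2 ≤ b :=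
  ciSup_le fun p => (eV_eq_sum_mul_cV1 u p.1 p2).trans_le (sum_mul_le_of_mem_stdSimplex p.2 h)

theorem iSup_eV_right_le [Nonempty (stdSimplex ℝ A2)] {u : A1 → A2 → ℝ} {p1 : A1 → ℝ} {b : ℝ}
    (h : ∀ a, cV2 u p1 a ≤ b) : ⨆ p : stdSimplex ℝ A2, eV u p1 p.1 ≤ b :=
  ciSup_le fun p => (eV_eq_sum_mul_cV2 u p1 p.1).trans_le (sum_mul_le_of_mem_stdSimplex p.2 h)

end

theorem lt_add_of_replicator_mutator_eq_zero {p q v μ c : ℝ} (hμ : 0 < μ) (hc : 0 < c)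
    (hp : 0 ≤ p) (h : p * (q - v) + μ * (c - p) = 0) : q < v + μ := by
  have hp : 0 < p := hp.lt_of_ne <| by
    rintro rfl
    nlinarith [mul_pos hμ hc]
  nlinarith [mul_pos hμ hc]

theorem rmd_stationary_approx_nash_general
    [Fintype A1] [Fintype A2]
    (u1 u2 : A1 → A2 → ℝ) (hzs : ∀ a1 a2, u2 a1 a2 = -u1 a1 a2)
    (μ : ℝ) (hμ : 0 < μ)
    (c1 : A1 → ℝ) (c2 : A2 → ℝ)
    (hc1pos : ∀ a, 0 < c1 a)
    (hc2pos : ∀ a, 0 < c2 a)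
    (π1μ : A1 → ℝ) (π2μ : A2 → ℝ)
    (hπ1μ : π1μ ∈ stdSimplex ℝ A1) (hπ2μ : π2μ ∈ stdSimplex ℝ A2)
    (hst1 : ∀ a, π1μ a * (cV1 u1 π2μ a - eV u1 π1μ π2μ) + μ * (c1 a - π1μ a) = 0)
    (hst2 : ∀ a, π2μ a * (cV2 u2 π1μ a - eV u2 π1μ π2μ) + μ * (c2 a - π2μ a) = 0) :
    (⨆ p : stdSimplex ℝ A1, eV u1 p.1 π2μ) + (⨆ p : stdSimplex ℝ A2, eV u2 π1μ p.1) ≤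
      2 * μ := by
  have : Nonempty (stdSimplex ℝ A1) := ⟨⟨π1μ, hπ1μ⟩⟩
  have : Nonempty (stdSimplex ℝ A2) := ⟨⟨π2μ, hπ2μ⟩⟩
  have hbr1 : ⨆ p : stdSimplex ℝ A1, eV u1 p.1 π2μ ≤ eV u1 π1μ π2μ + μ := iSup_eV_left_le
    fun a => (lt_add_of_replicator_mutator_eq_zero hμ (hc1pos a) (hπ1μ.1 a) (hst1 a)).le
  have hbr2 : ⨆ p : stdSimplex ℝ A2, eV u2 π1μ p.1 ≤ eV u2 π1μ π2μ + μ := iSup_eV_right_le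
    fun a => (lt_add_of_replicator_mutator_eq_zero hμ (hc2pos a) (hπ2μ.1 a) (hst2 a)).le
  linarith [eV_add_eV_of_zero_sum hzs π1μ π2μ]

/-- A stationary point `π^μ` of the replicator–mutator dynamics with
mutation parameter `μ > 0` is a `2μ`-Nash equilibrium:
`exploit(π^μ) = Σ_i max_{π̃_i ∈ Δ(A_i)} v_i^{π̃_i, π_{−i}^μ} ≤ 2μ`. -/
theorem rmd_stationary_approx_nash
    [Fintype A1] [Fintype A2]
    (u1 u2 : A1 → A2 → ℝ) (hzs : ∀ a1 a2, u2 a1 a2 = -u1 a1 a2)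
    (μ : ℝ) (hμ : 0 < μ)
    (c1 : A1 → ℝ) (c2 : A2 → ℝ)
    (hc1 : c1 ∈ stdSimplex ℝ A1) (hc1pos : ∀ a, 0 < c1 a)
    (hc2 : c2 ∈ stdSimplex ℝ A2) (hc2pos : ∀ a, 0 < c2 a)
    (π1μ : A1 → ℝ) (π2μ : A2 → ℝ)
    (hπ1μ : π1μ ∈ stdSimplex ℝ A1) (hπ2μ : π2μ ∈ stdSimplex ℝ A2)
    (hst1 : ∀ a, π1μ a * (cV1 u1 π2μ a - eV u1 π1μ π2μ) + μ * (c1 a - π1μ a) = 0)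
    (hst2 : ∀ a, π2μ a * (cV2 u2 π1μ a - eV u2 π1μ π2μ) + μ * (c2 a - π2μ a) = 0) :
    (⨆ p : stdSimplex ℝ A1, eV u1 p.1 π2μ) + (⨆ p : stdSimplex ℝ A2, eV u2 π1μ p.1) ≤
      2 * μ :=
  rmd_stationary_approx_nash_general u1 u2 hzs μ hμ c1 c2 hc1pos hc2pos π1μ π2μ hπ1μ hπ2μ hst1 hst2
end
end

section
/- Let t ↦ π^t be a differentiable trajectory in Δ°(A₁) × Δ°(A₂) following the replicator–mutator dynamics with mutation parameter μ > 0 and reference strategies c_i ∈ Δ°(A_i). Then for every fixed profile π ∈ Δ(A₁) × Δ(A₂), the map t ↦ KL(π, π^t) is differentiable and d/dt KL(π, π^t) = Σ_{i=1}^{2} v_i^{π_i^t, π_{−i}} + 2μ − μ Σ_{i=1}^{2} Σ_{a_i∈A_i} c_i(a_i) π_i(a_i)/π_i^t(a_i). -/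
/-! Differentiating termwise, `d/dt KL(π_i, π_i^t) = -Σ π_i(a) π̇_i^t(a) / π_i^t(a)`. For the
replicator part this is `v_i^{π^t} - v_i^{π_i, π_{-i}^t}`, since `π_i` sums to one; the mutation
part gives `μ - μ Σ c_i π_i / π_i^t`. Summing over both players, zero-sum cancels the two
`v_i^{π^t}` and turns each `-v_i^{π_i, π_{-i}^t}` into the opponent's `v_{-i}^{π_{-i}^t, π_i}`. -/

open Finset

noncomputable section

variable {A1 A2 : Type*}

theorem HasDerivAt.const_mul_log_const_div {f : ℝ → ℝ} {f' t : ℝ} (p : ℝ)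
    (hf : HasDerivAt f f' t) (hft : f t ≠ 0) :
    HasDerivAt (fun s => p * Real.log (p / f s)) (-(p * f' / f t)) t := by
  rcases eq_or_ne p 0 with rfl | hp
  · simpa using hasDerivAt_const t (0 : ℝ)
  · refine ((((hasDerivAt_const t p).fun_div hf hft).log
      (div_ne_zero hp hft)).const_mul p).congr_deriv ?_
    field_simp
    ring

theorem hasDerivAt_KLd {A : Type*} [Fintype A] (p : A → ℝ) {q : ℝ → A → ℝ} {q' : A → ℝ}
    {t : ℝ} (hq : ∀ a, HasDerivAt (fun s => q s a) (q' a) t) (hqt : ∀ a, q t a ≠ 0) :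
    HasDerivAt (fun s => KLd p (q s)) (-∑ a, p a * q' a / q t a) t := by
  simp only [KLd, ← Finset.sum_neg_distrib]
  exact HasDerivAt.fun_sum fun a _ => (hq a).const_mul_log_const_div (p a) (hqt a)

theorem hasDerivAt_KLd_replicatorMutator {A : Type*} [Fintype A] {p : A → ℝ}
    (hp : ∑ a, p a = 1) {q : ℝ → A → ℝ} {g c : A → ℝ} {v μ t : ℝ}
    (hq : ∀ a, HasDerivAt (fun s => q s a) (q t a * (g a - v) + μ * (c a - q t a)) t)
    (hqt : ∀ a, q t a ≠ 0) :
    HasDerivAt (fun s => KLd p (q s))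
      (v - ∑ a, p a * g a + μ - μ * ∑ a, c a * p a / q t a) t := by
  refine (hasDerivAt_KLd p hq hqt).congr_deriv ?_
  have hterm : ∀ a, p a * (q t a * (g a - v) + μ * (c a - q t a)) / q t a
      = p a * g a - v * p a + μ * (c a * p a / q t a) - μ * p a := by
    intro a
    field_simp [hqt a]
    ring
  simp only [hterm, Finset.sum_sub_distrib, Finset.sum_add_distrib, ← Finset.mul_sum, hp]
  ring

theorem sum_mul_cV1 [Fintype A1] [Fintype A2] (u : A1 → A2 → ℝ) (p1 : A1 → ℝ)
    (p2 : A2 → ℝ) : ∑ a, p1 a * cV1 u p2 a = eV u p1 p2 := by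
  simp only [cV1, eV, Finset.mul_sum, mul_assoc]

theorem sum_mul_cV2 [Fintype A1] [Fintype A2] (u : A1 → A2 → ℝ) (p1 : A1 → ℝ)
    (p2 : A2 → ℝ) : ∑ a, p2 a * cV2 u p1 a = eV u p1 p2 := by
  simp only [cV2, eV, Finset.mul_sum]
  rw [Finset.sum_comm]
  exact Finset.sum_congr rfl fun _ _ => Finset.sum_congr rfl fun _ _ => by ring

theorem eV_of_forall_eq_neg [Fintype A1] [Fintype A2] {u1 u2 : A1 → A2 → ℝ}
    (h : ∀ a1 a2, u2 a1 a2 = -u1 a1 a2) (p1 : A1 → ℝ) (p2 : A2 → ℝ) :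
    eV u2 p1 p2 = -eV u1 p1 p2 := by
  simp only [eV, h, mul_neg, Finset.sum_neg_distrib]

theorem rmd_kl_derivative_general
    [Fintype A1] [Fintype A2]
    (u1 u2 : A1 → A2 → ℝ) (hzs : ∀ a1 a2, u2 a1 a2 = -u1 a1 a2)
    (μ : ℝ)
    (c1 : A1 → ℝ) (c2 : A2 → ℝ)
    (π1 : ℝ → A1 → ℝ) (π2 : ℝ → A2 → ℝ)
    (hpos1 : ∀ t a, 0 < π1 t a)
    (hpos2 : ∀ t a, 0 < π2 t a)
    (hrmd1 : ∀ t a, HasDerivAt (fun s => π1 s a)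
      (π1 t a * (cV1 u1 (π2 t) a - eV u1 (π1 t) (π2 t)) + μ * (c1 a - π1 t a)) t)
    (hrmd2 : ∀ t a, HasDerivAt (fun s => π2 s a)
      (π2 t a * (cV2 u2 (π1 t) a - eV u2 (π1 t) (π2 t)) + μ * (c2 a - π2 t a)) t)
    (π1f : A1 → ℝ) (π2f : A2 → ℝ)
    (hπ1f : π1f ∈ stdSimplex ℝ A1) (hπ2f : π2f ∈ stdSimplex ℝ A2) :
    ∀ t, HasDerivAt (fun s => KLd π1f (π1 s) + KLd π2f (π2 s))
      ((eV u1 (π1 t) π2f + eV u2 π1f (π2 t)) + 2 * μ -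
        μ * ((∑ a, c1 a * π1f a / π1 t a) + (∑ a, c2 a * π2f a / π2 t a))) t := by
  intro t
  have h1 := hasDerivAt_KLd_replicatorMutator hπ1f.2 (hrmd1 t) fun a => (hpos1 t a).ne'
  have h2 := hasDerivAt_KLd_replicatorMutator hπ2f.2 (hrmd2 t) fun a => (hpos2 t a).ne'
  refine (h1.add h2).congr_deriv ?_
  rw [sum_mul_cV1, sum_mul_cV2]
  simp only [eV_of_forall_eq_neg hzs]
  ring

/-- Along a differentiable full-support trajectory of the
replicator–mutator dynamics, for every fixed profile `π`, `t ↦ KL(π, π^t)` is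
differentiable with
`d/dt KL(π, π^t) = Σ_i v_i^{π_i^t, π_{−i}} + 2μ − μ Σ_i Σ_{a_i} c_i(a_i) π_i(a_i)/π_i^t(a_i)`. -/
theorem rmd_kl_derivative
    [Fintype A1] [Fintype A2]
    (u1 u2 : A1 → A2 → ℝ) (hzs : ∀ a1 a2, u2 a1 a2 = -u1 a1 a2)
    (μ : ℝ) (hμ : 0 < μ)
    (c1 : A1 → ℝ) (c2 : A2 → ℝ)
    (hc1 : c1 ∈ stdSimplex ℝ A1) (hc1pos : ∀ a, 0 < c1 a)
    (hc2 : c2 ∈ stdSimplex ℝ A2) (hc2pos : ∀ a, 0 < c2 a)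
    (π1 : ℝ → A1 → ℝ) (π2 : ℝ → A2 → ℝ)
    (hmem1 : ∀ t, π1 t ∈ stdSimplex ℝ A1) (hpos1 : ∀ t a, 0 < π1 t a)
    (hmem2 : ∀ t, π2 t ∈ stdSimplex ℝ A2) (hpos2 : ∀ t a, 0 < π2 t a)
    (hrmd1 : ∀ t a, HasDerivAt (fun s => π1 s a)
      (π1 t a * (cV1 u1 (π2 t) a - eV u1 (π1 t) (π2 t)) + μ * (c1 a - π1 t a)) t)
    (hrmd2 : ∀ t a, HasDerivAt (fun s => π2 s a)
      (π2 t a * (cV2 u2 (π1 t) a - eV u2 (π1 t) (π2 t)) + μ * (c2 a - π2 t a)) t)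
    (π1f : A1 → ℝ) (π2f : A2 → ℝ)
    (hπ1f : π1f ∈ stdSimplex ℝ A1) (hπ2f : π2f ∈ stdSimplex ℝ A2) :
    ∀ t, HasDerivAt (fun s => KLd π1f (π1 s) + KLd π2f (π2 s))
      ((eV u1 (π1 t) π2f + eV u2 π1f (π2 t)) + 2 * μ -
        μ * ((∑ a, c1 a * π1f a / π1 t a) + (∑ a, c2 a * π2f a / π2 t a))) t :=
  rmd_kl_derivative_general u1 u2 hzs μ c1 c2 π1 π2 hpos1 hpos2 hrmd1 hrmd2 π1f π2f hπ1f hπ2f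
end
end
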